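/- arXiv:2505.17135 — 3 statements merged into one kernel-verified Lean document; each statement's English description precedes it below -/
import Mathlib

section
/- Let S ∈ ℝ^{D×D} be symmetric positive semidefinite with eigenvalues λ_1 ≥ λ_2 ≥ ⋯ ≥ λ_D and orthonormal eigenvectors γ_1,…,γ_D. For any matrix Λ ∈ ℝ^{D×D} of rank at most m, tr((I − SΛ)ᵀ S (I − SΛ)) ≥ Σ_{q=m+1}^{D} λ_q. -/
open Matrix

/-- Trace of a real PSD matrix is nonnegative. -/
lemma psd_trace_nonneg' {n : Type*} [Fintype n] [DecidableEq n]
    {A : Matrix n n ℝ} (hA : A.PosSemidef) : 0 ≤ A.trace := by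
  apply Finset.sum_nonneg
  intro i _
  have := hA.dotProduct_mulVec_nonneg (Pi.single i 1)
  simpa [dotProduct, mulVec, Pi.single_apply] using this

/-- There exist `D - m` orthonormal vectors in the kernel of a matrix of rank at most `m`,
satisfying Bessel's inequality. -/
lemma exists_orthonormal_ker' (D m : ℕ) (hm : m ≤ D) (Λ : Matrix (Fin D) (Fin D) ℝ)
    (hrank : Λ.rank ≤ m) :
    ∃ u : Fin (D - m) → (Fin D → ℝ),
      (∀ i j, u i ⬝ᵥ u j = if i = j then 1 else 0) ∧
      (∀ j, Λ.mulVec (u j) = 0) ∧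
      (∀ x : Fin D → ℝ, ∑ j, (u j ⬝ᵥ x) ^ 2 ≤ x ⬝ᵥ x) := by
  classical
  let K : Submodule ℝ (EuclideanSpace ℝ (Fin D)) := LinearMap.ker (Matrix.toEuclideanLin Λ)
  have hdim : D - m ≤ Module.finrank ℝ K := by
    have h1 : Module.finrank ℝ (LinearMap.range (Matrix.toEuclideanLin Λ))
        + Module.finrank ℝ K = D := by
      have := LinearMap.finrank_range_add_finrank_ker (Matrix.toEuclideanLin Λ)
      simpa [K] using this
    have h2 : Module.finrank ℝ (LinearMap.range (Matrix.toEuclideanLin Λ)) ≤ m := by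
      rw [Matrix.rank_eq_finrank_range_toLin Λ (EuclideanSpace.basisFun (Fin D) ℝ).toBasis
        (EuclideanSpace.basisFun (Fin D) ℝ).toBasis] at hrank
      have heq : Matrix.toLin (EuclideanSpace.basisFun (Fin D) ℝ).toBasis
          (EuclideanSpace.basisFun (Fin D) ℝ).toBasis Λ = Matrix.toEuclideanLin Λ := by
        ext v i
        simp [Matrix.toLin_apply, Matrix.mulVec, dotProduct, Pi.single_apply]
      rw [heq] at hrank; exact hrank
    omega
  let b := stdOrthonormalBasis ℝ K
  let u : Fin (D - m) → EuclideanSpace ℝ (Fin D) :=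
    fun j => (b (Fin.castLE hdim j) : EuclideanSpace ℝ (Fin D))
  have hu_on : Orthonormal ℝ u := by
    have h1 : Orthonormal ℝ (fun i => (b i : EuclideanSpace ℝ (Fin D))) :=
      b.orthonormal.comp_linearIsometry K.subtypeₗᵢ
    exact h1.comp _ (Fin.castLE_injective hdim)
  have hinner : ∀ (x y : EuclideanSpace ℝ (Fin D)),
      (inner ℝ x y : ℝ) = (x.ofLp : Fin D → ℝ) ⬝ᵥ y.ofLp := by
    intro x y
    simp [EuclideanSpace.inner_eq_star_dotProduct, dotProduct_comm]
  refine ⟨fun j => (u j).ofLp, ?_, ?_, ?_⟩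
  · intro i j
    have := orthonormal_iff_ite.mp hu_on i j
    rw [← hinner]; exact this
  · intro j
    have : u j ∈ K := (b (Fin.castLE hdim j)).2
    have := congrArg WithLp.ofLp (LinearMap.mem_ker.mp this)
    simpa using this
  · intro x
    have hb := hu_on.sum_inner_products_le (𝕜 := ℝ) (s := Finset.univ)
      (WithLp.toLp 2 x : EuclideanSpace ℝ (Fin D))
    calc ∑ j, ((u j).ofLp ⬝ᵥ x) ^ 2
        = ∑ j, ‖(inner ℝ (u j) (WithLp.toLp 2 x : EuclideanSpace ℝ (Fin D)) : ℝ)‖ ^ 2 := by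
          refine Finset.sum_congr rfl fun j _ => ?_
          rw [hinner, Real.norm_eq_abs, sq_abs]
      _ ≤ ‖(WithLp.toLp 2 x : EuclideanSpace ℝ (Fin D))‖ ^ 2 := hb
      _ = x ⬝ᵥ x := by rw [← real_inner_self_eq_norm_sq, hinner]

/-- The combinatorial core: minimizing `∑ λᵢ pᵢ` with `0 ≤ pᵢ ≤ 1` and `∑ pᵢ ≥ D - m`. -/
lemma comb_bound' (D m : ℕ) (hm : m < D) (lam p : Fin D → ℝ)
    (hord : ∀ i j : Fin D, i ≤ j → lam j ≤ lam i)
    (hlm : 0 ≤ lam ⟨m, hm⟩)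
    (hp0 : ∀ i, 0 ≤ p i) (hp1 : ∀ i, p i ≤ 1)
    (hsum : ((D : ℝ) - m) ≤ ∑ i, p i) :
    ∑ q ∈ Finset.univ.filter (fun q : Fin D => m ≤ (q : ℕ)), lam q ≤ ∑ i, lam i * p i := by
  classical
  set F := Finset.univ.filter (fun q : Fin D => m ≤ (q : ℕ)) with hF
  have hcard : F.card = D - m := by
    have h1 : F = Finset.Ici (⟨m, hm⟩ : Fin D) := by
      ext x; simp [hF, Fin.le_def]
    rw [h1, Fin.card_Ici]
  have hmem : ∀ i : Fin D, i ∈ F ↔ m ≤ (i : ℕ) := by intro i; simp [hF]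
  have key1 : ∀ i ∈ F, lam i * (1 - p i) ≤ lam ⟨m, hm⟩ * (1 - p i) := by
    intro i hi
    have : lam i ≤ lam ⟨m, hm⟩ := hord ⟨m, hm⟩ i ((hmem i).mp hi)
    exact mul_le_mul_of_nonneg_right this (by linarith [hp1 i])
  have key2 : ∀ i ∈ Fᶜ, lam ⟨m, hm⟩ * p i ≤ lam i * p i := by
    intro i hi
    have hi' : (i : ℕ) < m := by
      have := Finset.mem_compl.mp hi
      rw [hmem] at this; omega
    have : lam ⟨m, hm⟩ ≤ lam i := hord i ⟨m, hm⟩ (by simpa [Fin.le_def] using hi'.le)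
    exact mul_le_mul_of_nonneg_right this (hp0 i)
  have split : ∑ i, lam i * p i = ∑ i ∈ F, lam i * p i + ∑ i ∈ Fᶜ, lam i * p i := by
    rw [← Finset.sum_add_sum_compl F]
  have splitp : ∑ i, p i = ∑ i ∈ F, p i + ∑ i ∈ Fᶜ, p i := by
    rw [← Finset.sum_add_sum_compl F]
  have h1 : ∑ i ∈ F, lam i - ∑ i ∈ F, lam i * p i = ∑ i ∈ F, lam i * (1 - p i) := by
    rw [← Finset.sum_sub_distrib]; congr 1; ext i; ring
  have h2 : ∑ i ∈ F, lam i * (1 - p i) ≤ lam ⟨m, hm⟩ * ∑ i ∈ F, (1 - p i) := by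
    rw [Finset.mul_sum]; exact Finset.sum_le_sum key1
  have h3 : lam ⟨m, hm⟩ * ∑ i ∈ Fᶜ, p i ≤ ∑ i ∈ Fᶜ, lam i * p i := by
    rw [Finset.mul_sum]; exact Finset.sum_le_sum key2
  have h4 : ∑ i ∈ F, (1 - p i) = (F.card : ℝ) - ∑ i ∈ F, p i := by
    rw [Finset.sum_sub_distrib]; simp
  have h5 : ∑ i ∈ F, (1 - p i) ≤ ∑ i ∈ Fᶜ, p i := by
    rw [h4, hcard]
    have hc : ((D - m : ℕ) : ℝ) = (D : ℝ) - m := by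
      push_cast [Nat.cast_sub hm.le]; ring
    rw [hc]
    linarith [splitp, hsum]
  have h6 : lam ⟨m, hm⟩ * ∑ i ∈ F, (1 - p i) ≤ lam ⟨m, hm⟩ * ∑ i ∈ Fᶜ, p i :=
    mul_le_mul_of_nonneg_left h5 hlm
  linarith [h1, h2, h3, h6, split]

/-- Eckart–Young-type lower bound: if `S` is symmetric PSD with eigenvalues
`λ 0 ≥ λ 1 ≥ ⋯` and orthonormal eigenvectors `γ i`, then for every `Λ` of rank at most `m`,
`tr((I - SΛ)ᵀ S (I - SΛ)) ≥ ∑_{q ≥ m} λ q`. -/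
theorem trace_lower_bound_rank_m (D : ℕ) (S : Matrix (Fin D) (Fin D) ℝ)
    (hS : S.PosSemidef)
    (lam : Fin D → ℝ) (γ : Fin D → (Fin D → ℝ))
    (horth : ∀ i j, (γ i) ⬝ᵥ (γ j) = if i = j then 1 else 0)
    (heig : ∀ i, S.mulVec (γ i) = lam i • γ i)
    (hord : ∀ i j : Fin D, i ≤ j → lam j ≤ lam i)
    (m : ℕ) (hm : m < D)
    (Λ : Matrix (Fin D) (Fin D) ℝ) (hrank : Λ.rank ≤ m) :
    ∑ q ∈ Finset.univ.filter (fun q : Fin D => m ≤ (q : ℕ)), lam q ≤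
      ((1 - S * Λ)ᵀ * S * (1 - S * Λ)).trace := by
  classical
  obtain ⟨u, huo, huk, hbes⟩ := exists_orthonormal_ker' D m hm.le Λ hrank
  set M : Matrix (Fin D) (Fin D) ℝ := 1 - S * Λ with hMdef
  set P : Matrix (Fin D) (Fin D) ℝ := ∑ j, vecMulVec (u j) (u j) with hPdef
  -- basic vecMulVec algebra
  have hmulvv : ∀ (A : Matrix (Fin D) (Fin D) ℝ) (a c : Fin D → ℝ),
      A * vecMulVec a c = vecMulVec (A *ᵥ a) c := by
    intro A a c
    ext i j
    simp only [Matrix.mul_apply, vecMulVec_apply, mulVec, dotProduct, Finset.sum_mul]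
    exact Finset.sum_congr rfl fun x _ => by ring
  have hvv : ∀ a c d e : Fin D → ℝ,
      vecMulVec a c * vecMulVec d e = (c ⬝ᵥ d) • vecMulVec a e := by
    intro a c d e
    ext i j
    simp only [Matrix.mul_apply, vecMulVec_apply, Matrix.smul_apply, smul_eq_mul,
      dotProduct, Finset.sum_mul]
    exact Finset.sum_congr rfl fun x _ => by ring
  have hPT : Pᵀ = P := by
    rw [hPdef, Matrix.transpose_sum]
    refine Finset.sum_congr rfl fun j _ => ?_
    ext a c
    simp [vecMulVec_apply, mul_comm]
  have hΛP : Λ * P = 0 := by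
    rw [hPdef, Finset.mul_sum]
    refine Finset.sum_eq_zero fun j _ => ?_
    rw [hmulvv, huk j]
    ext a c; simp [vecMulVec_apply]
  have hPP : P * P = P := by
    rw [hPdef, Finset.sum_mul_sum]
    have : ∀ j l, vecMulVec (u j) (u j) * vecMulVec (u l) (u l)
        = (if j = l then (1:ℝ) else 0) • vecMulVec (u j) (u l) := by
      intro j l; rw [hvv, huo]
    calc (∑ j, ∑ l, vecMulVec (u j) (u j) * vecMulVec (u l) (u l))
        = ∑ j, ∑ l, (if j = l then (1:ℝ) else 0) • vecMulVec (u j) (u l) := by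
          refine Finset.sum_congr rfl fun j _ => Finset.sum_congr rfl fun l _ => this j l
      _ = ∑ j, vecMulVec (u j) (u j) := by
          refine Finset.sum_congr rfl fun j _ => ?_
          simp [ite_smul]
  have hMP : M * P = P := by
    rw [hMdef, Matrix.sub_mul, Matrix.one_mul, Matrix.mul_assoc, hΛP, Matrix.mul_zero, sub_zero]
  -- PSD facts
  set A : Matrix (Fin D) (Fin D) ℝ := Mᵀ * S * M with hAdef
  have hApsd : A.PosSemidef := by
    have := hS.conjTranspose_mul_mul_same M
    rwa [Matrix.conjTranspose_eq_transpose_of_trivial] at this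
  -- trace A = trace (A*P) + trace (A*(1-P)), and trace(A*(1-P)) ≥ 0
  have hQpsd : ((1 - P)ᵀ * A * (1 - P)).PosSemidef := by
    have := hApsd.conjTranspose_mul_mul_same (1 - P)
    rwa [Matrix.conjTranspose_eq_transpose_of_trivial] at this
  have hQQ : (1 - P) * (1 - P) = 1 - P := by
    rw [Matrix.mul_sub, Matrix.mul_one, Matrix.sub_mul, Matrix.one_mul, hPP]
    abel
  have htr_rest : ((1 - P)ᵀ * A * (1 - P)).trace = (A * (1 - P)).trace := by
    rw [Matrix.transpose_sub, Matrix.transpose_one, hPT]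
    rw [Matrix.trace_mul_comm ((1 - P) * A) (1 - P), ← Matrix.mul_assoc, hQQ]
    exact Matrix.trace_mul_comm _ _
  have htrace_ge : (A * P).trace ≤ A.trace := by
    have h0 : 0 ≤ (A * (1 - P)).trace := htr_rest ▸ psd_trace_nonneg' hQpsd
    have : A * (1 - P) = A - A * P := by rw [Matrix.mul_sub, Matrix.mul_one]
    rw [this, Matrix.trace_sub] at h0
    linarith
  -- trace (A*P) = trace (S*P)
  have hPMt : P * Mᵀ = P := by
    calc P * Mᵀ = (M * Pᵀ)ᵀ := by rw [Matrix.transpose_mul, Matrix.transpose_transpose]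
    _ = (M * P)ᵀ := by rw [hPT]
    _ = P := by rw [hMP, hPT]
  have htrAP : (A * P).trace = (S * P).trace := by
    calc (A * P).trace = (Mᵀ * S * (M * P)).trace := by
          rw [hAdef, Matrix.mul_assoc (Mᵀ * S) M P]
      _ = (Mᵀ * (S * P)).trace := by rw [hMP, Matrix.mul_assoc]
      _ = (S * P * Mᵀ).trace := by rw [Matrix.trace_mul_comm]
      _ = (S * (P * Mᵀ)).trace := by rw [Matrix.mul_assoc]
      _ = (S * P).trace := by rw [hPMt]
  -- trace (S*P) = ∑ j, (S *ᵥ u j) ⬝ᵥ u j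
  have htrSP : (S * P).trace = ∑ j, (S *ᵥ u j) ⬝ᵥ u j := by
    rw [hPdef, Finset.mul_sum, Matrix.trace_sum]
    refine Finset.sum_congr rfl fun j _ => ?_
    rw [hmulvv]
    simp [Matrix.trace, Matrix.diag, vecMulVec_apply, dotProduct]
  -- eigenvector expansion machinery
  set Γ : Matrix (Fin D) (Fin D) ℝ := Matrix.of γ with hΓdef
  have hΓΓT : Γ * Γᵀ = 1 := by
    ext i j
    simp only [Matrix.mul_apply, Matrix.transpose_apply, hΓdef, Matrix.of_apply,
      Matrix.one_apply]
    simpa [dotProduct] using horth i j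
  have hΓTΓ : Γᵀ * Γ = 1 := mul_eq_one_comm.mp hΓΓT
  have hdot : ∀ v w : Fin D → ℝ, v ⬝ᵥ w = ∑ i, (γ i ⬝ᵥ v) * (γ i ⬝ᵥ w) := by
    intro v w
    have h1 : ∀ (x : Fin D → ℝ) (i : Fin D), γ i ⬝ᵥ x = (Γ *ᵥ x) i := by
      intro x i; simp [hΓdef, mulVec, dotProduct]
    have h2 : ∑ i, (γ i ⬝ᵥ v) * (γ i ⬝ᵥ w) = (Γ *ᵥ v) ⬝ᵥ (Γ *ᵥ w) := by
      refine Finset.sum_congr rfl fun i _ => by rw [h1 v i, h1 w i]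
    rw [h2, dotProduct_mulVec, ← Matrix.mulVec_transpose, Matrix.mulVec_mulVec, hΓTΓ,
      Matrix.one_mulVec]
  have hSsym : Sᵀ = S := by
    have := hS.1
    rwa [Matrix.IsHermitian, Matrix.conjTranspose_eq_transpose_of_trivial] at this
  have hgam_S : ∀ (i : Fin D) (v : Fin D → ℝ), γ i ⬝ᵥ (S *ᵥ v) = lam i * (γ i ⬝ᵥ v) := by
    intro i v
    rw [dotProduct_mulVec, ← Matrix.mulVec_transpose, hSsym, heig i, smul_dotProduct,
      smul_eq_mul]
  have hkey : ∀ v : Fin D → ℝ, (S *ᵥ v) ⬝ᵥ v = ∑ i, lam i * (γ i ⬝ᵥ v) ^ 2 := by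
    intro v
    rw [hdot (S *ᵥ v) v]
    refine Finset.sum_congr rfl fun i _ => ?_
    rw [hgam_S i v]; ring
  -- define p and its properties
  set p : Fin D → ℝ := fun i => ∑ j, (γ i ⬝ᵥ u j) ^ 2 with hpdef
  have htrSP2 : (S * P).trace = ∑ i, lam i * p i := by
    rw [htrSP]
    calc ∑ j, (S *ᵥ u j) ⬝ᵥ u j = ∑ j, ∑ i, lam i * (γ i ⬝ᵥ u j) ^ 2 := by
          exact Finset.sum_congr rfl fun j _ => hkey (u j)
      _ = ∑ i, ∑ j, lam i * (γ i ⬝ᵥ u j) ^ 2 := Finset.sum_comm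
      _ = ∑ i, lam i * p i := by
          refine Finset.sum_congr rfl fun i _ => ?_
          rw [hpdef, Finset.mul_sum]
  have hp0 : ∀ i, 0 ≤ p i := fun i => Finset.sum_nonneg fun j _ => sq_nonneg _
  have hp1 : ∀ i, p i ≤ 1 := by
    intro i
    have := hbes (γ i)
    rw [horth i i] at this
    simp only [if_pos rfl] at this
    calc p i = ∑ j, (u j ⬝ᵥ γ i) ^ 2 := by
          refine Finset.sum_congr rfl fun j _ => by rw [dotProduct_comm]
      _ ≤ 1 := this
  have hpsum : ((D : ℝ) - m) ≤ ∑ i, p i := by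
    have h1 : ∑ i, p i = ∑ j : Fin (D - m), (u j ⬝ᵥ u j) := by
      rw [hpdef]
      rw [Finset.sum_comm]
      refine Finset.sum_congr rfl fun j _ => ?_
      rw [hdot (u j) (u j)]
      exact Finset.sum_congr rfl fun i _ => by ring
    have h2 : ∑ j : Fin (D - m), (u j ⬝ᵥ u j) = ((D - m : ℕ) : ℝ) := by
      rw [Finset.sum_congr rfl fun j (_ : j ∈ Finset.univ) => by rw [huo j j, if_pos rfl]]
      simp
    rw [h1, h2]
    push_cast [Nat.cast_sub hm.le]
    exact le_refl _
  have hlm : 0 ≤ lam ⟨m, hm⟩ := by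
    have h0 := hS.dotProduct_mulVec_nonneg (γ ⟨m, hm⟩)
    rw [star_trivial, heig ⟨m, hm⟩, dotProduct_smul, smul_eq_mul, horth] at h0
    simpa using h0
  calc ∑ q ∈ Finset.univ.filter (fun q : Fin D => m ≤ (q : ℕ)), lam q
      ≤ ∑ i, lam i * p i := comb_bound' D m hm lam p hord hlm hp0 hp1 hpsum
    _ = (S * P).trace := htrSP2.symm
    _ = (A * P).trace := htrAP.symm
    _ ≤ A.trace := htrace_ge
end

section
/- Let S be a symmetric positive semidefinite D×D matrix with spectral decomposition S = Σ_i λ_i γ_i γ_iᵀ, where λ_1 ≥ ⋯ ≥ λ_D and γ_i are orthonormal. Suppose λ_m > 0. Setting Λ* = Σ_{i=1}^m (1/λ_i) γ_i γ_iᵀ gives tr((I − SΛ*)² S) = Σ_{q=m+1}^D λ_q. Consequently Λ* minimizes tr((I − SΛ)² S) over all Λ of rank at most m. -/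
open Matrix

section AuxLemmas

variable {D : ℕ}

private lemma vmv_mul_vmv (u v w x : Fin D → ℝ) :
    vecMulVec u v * vecMulVec w x = (v ⬝ᵥ w) • vecMulVec u x := by
  ext i j
  simp only [Matrix.mul_apply, vecMulVec_apply, Matrix.smul_apply, smul_eq_mul, dotProduct,
    Finset.sum_mul]
  exact Finset.sum_congr rfl fun k _ => by ring

private lemma vmv_transpose (u v : Fin D → ℝ) : (vecMulVec u v)ᵀ = vecMulVec v u := by
  ext i j; simp [vecMulVec_apply, mul_comm]

private lemma mul_vmv (M : Matrix (Fin D) (Fin D) ℝ) (u v : Fin D → ℝ) :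
    M * vecMulVec u v = vecMulVec (M.mulVec u) v := by
  ext i j
  simp only [Matrix.mul_apply, vecMulVec_apply, mulVec, dotProduct, Finset.sum_mul]
  exact Finset.sum_congr rfl fun k _ => by ring

private lemma trace_vmv (u v : Fin D → ℝ) : (vecMulVec u v).trace = u ⬝ᵥ v := by
  simp [Matrix.trace, vecMulVec_apply, dotProduct]

private lemma trace_vmv_mul (u v : Fin D → ℝ) (M : Matrix (Fin D) (Fin D) ℝ) :
    (vecMulVec u v * M).trace = v ⬝ᵥ (M.mulVec u) := by
  simp only [Matrix.trace, Matrix.diag_apply, Matrix.mul_apply, vecMulVec_apply, dotProduct,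
    mulVec, Finset.mul_sum]
  rw [Finset.sum_comm]
  exact Finset.sum_congr rfl fun j _ => Finset.sum_congr rfl fun i _ => by ring

private lemma trace_transpose_mul_self_nonneg (M : Matrix (Fin D) (Fin D) ℝ) :
    0 ≤ (Mᵀ * M).trace := by
  simp only [Matrix.trace, Matrix.diag_apply, Matrix.mul_apply, Matrix.transpose_apply]
  exact Finset.sum_nonneg fun j _ => Finset.sum_nonneg fun i _ => mul_self_nonneg _

private lemma completeness (γ : Fin D → Fin D → ℝ)
    (horth : ∀ i j, (γ i) ⬝ᵥ (γ j) = if i = j then 1 else 0) :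
    ∑ i, vecMulVec (γ i) (γ i) = (1 : Matrix (Fin D) (Fin D) ℝ) := by
  have hG : (Matrix.of γ) * (Matrix.of γ)ᵀ = 1 := by
    ext i j
    simpa [Matrix.mul_apply, dotProduct, Matrix.one_apply] using horth i j
  have hG2 : (Matrix.of γ)ᵀ * (Matrix.of γ) = 1 := mul_eq_one_comm.mp hG
  ext i j
  have h := congrFun (congrFun hG2 i) j
  simp only [Matrix.mul_apply, Matrix.transpose_apply, Matrix.of_apply] at h
  simpa [Matrix.sum_apply, vecMulVec_apply] using h

private lemma trace_eq_sum (γ : Fin D → Fin D → ℝ)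
    (horth : ∀ i j, (γ i) ⬝ᵥ (γ j) = if i = j then 1 else 0)
    (M : Matrix (Fin D) (Fin D) ℝ) :
    M.trace = ∑ q, (γ q) ⬝ᵥ (M.mulVec (γ q)) := by
  calc M.trace = ((∑ i, vecMulVec (γ i) (γ i)) * M).trace := by
        rw [completeness γ horth, one_mul]
    _ = ∑ q, (vecMulVec (γ q) (γ q) * M).trace := by
        rw [Finset.sum_mul, Matrix.trace_sum]
    _ = _ := Finset.sum_congr rfl fun q _ => trace_vmv_mul _ _ _

private lemma dot_self_nonneg' (v : Fin D → ℝ) : 0 ≤ v ⬝ᵥ v :=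
  Finset.sum_nonneg fun i _ => mul_self_nonneg _

private lemma proj_dot_nonneg (Q : Matrix (Fin D) (Fin D) ℝ) (hQt : Qᵀ = Q)
    (hQQ : Q * Q = Q) (v : Fin D → ℝ) : 0 ≤ v ⬝ᵥ (Q.mulVec v) := by
  have hvm : v ᵥ* Q = Q.mulVec v := by
    conv_lhs => rw [← hQt, Matrix.vecMul_transpose]
  have h1 : v ⬝ᵥ (Q.mulVec v) = (Q.mulVec v) ⬝ᵥ (Q.mulVec v) := by
    calc v ⬝ᵥ (Q.mulVec v) = v ⬝ᵥ ((Q * Q).mulVec v) := by rw [hQQ]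
      _ = (v ᵥ* Q) ⬝ᵥ (Q.mulVec v) := by rw [← Matrix.mulVec_mulVec, Matrix.dotProduct_mulVec]
      _ = (Q.mulVec v) ⬝ᵥ (Q.mulVec v) := by rw [hvm]
  rw [h1]
  exact dot_self_nonneg' _

set_option maxHeartbeats 1000000 in
private lemma exists_proj (m : ℕ) (B : Matrix (Fin D) (Fin D) ℝ) (hB : B.rank ≤ m) :
    ∃ Q : Matrix (Fin D) (Fin D) ℝ, Qᵀ = Q ∧ Q * Q = Q ∧ B * Q = 0 ∧
      ((D : ℝ) - m) ≤ Q.trace := by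
  classical
  let e : EuclideanSpace ℝ (Fin D) ≃ₗ[ℝ] (Fin D → ℝ) := WithLp.linearEquiv 2 ℝ _
  let f : EuclideanSpace ℝ (Fin D) →ₗ[ℝ] (Fin D → ℝ) := B.mulVecLin ∘ₗ (e : _ →ₗ[ℝ] _)
  set L : Submodule ℝ (EuclideanSpace ℝ (Fin D)) := LinearMap.ker f with hL
  have hmemL : ∀ x : EuclideanSpace ℝ (Fin D), x ∈ L ↔ B.mulVec (e x) = 0 := by
    intro x
    rw [hL, LinearMap.mem_ker]
    simp [f, Matrix.mulVecLin_apply]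
  set r := Module.finrank ℝ L with hr
  let b : OrthonormalBasis (Fin r) ℝ L := stdOrthonormalBasis ℝ L
  let u : Fin r → (Fin D → ℝ) := fun k => e ((b k : EuclideanSpace ℝ (Fin D)))
  have hu_dot : ∀ k l, u k ⬝ᵥ u l = if k = l then 1 else 0 := by
    intro k l
    have hb := b.orthonormal
    rw [orthonormal_iff_ite] at hb
    have h := hb k l
    rw [Submodule.coe_inner, PiLp.inner_apply] at h
    simpa [RCLike.inner_apply, starRingEnd_apply, dotProduct, u, e, WithLp.coe_linearEquiv,
      fun x y => mul_comm ((b l : EuclideanSpace ℝ (Fin D)).ofLp x) y] using h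
  have hu_ker : ∀ k, B.mulVec (u k) = 0 := by
    intro k
    have h1 : (b k : EuclideanSpace ℝ (Fin D)) ∈ L := (b k).2
    rw [hmemL] at h1
    exact h1
  refine ⟨∑ k, vecMulVec (u k) (u k), ?_, ?_, ?_, ?_⟩
  · rw [Matrix.transpose_sum]
    exact Finset.sum_congr rfl fun k _ => vmv_transpose _ _
  · rw [Finset.sum_mul]
    refine Finset.sum_congr rfl fun k _ => ?_
    rw [Finset.mul_sum]
    have h2 : ∀ l : Fin r, vecMulVec (u k) (u k) * vecMulVec (u l) (u l)
        = (if k = l then (1:ℝ) else 0) • vecMulVec (u k) (u l) := by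
      intro l; rw [vmv_mul_vmv, hu_dot]
    rw [Finset.sum_congr rfl fun l _ => h2 l]
    simp [ite_smul]
  · rw [Finset.mul_sum]
    have h2 : ∀ k : Fin r, B * vecMulVec (u k) (u k) = 0 := by
      intro k
      rw [mul_vmv, hu_ker]
      ext i j
      simp [vecMulVec_apply]
    rw [Finset.sum_congr rfl fun k _ => h2 k]
    simp
  · have htr : (∑ k, vecMulVec (u k) (u k)).trace = r := by
      rw [Matrix.trace_sum]
      rw [Finset.sum_congr rfl (fun k _ => (trace_vmv _ _).trans (hu_dot k k))]
      simp
    rw [htr]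
    have hrn : D ≤ r + m := by
      have h1 := LinearMap.finrank_range_add_finrank_ker f
      have h2 : Module.finrank ℝ (EuclideanSpace ℝ (Fin D)) = D := by simp
      have h3 : LinearMap.range f = LinearMap.range B.mulVecLin := by
        rw [LinearMap.range_comp]
        rw [LinearEquiv.range, Submodule.map_top]
      have h4 : B.rank = Module.finrank ℝ (LinearMap.range B.mulVecLin) := rfl
      rw [h2, ← hL, ← hr, h3, ← h4] at h1
      omega
    have : (D : ℝ) ≤ (r : ℝ) + m := by exact_mod_cast hrn
    linarith

private lemma sum_lam_bound (D m : ℕ) (hm : m < D) (lam : Fin D → ℝ)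
    (hord : ∀ i j : Fin D, i ≤ j → lam j ≤ lam i) (hpos : 0 < lam ⟨m, hm⟩)
    (t : Fin D → ℝ) (ht0 : ∀ q, 0 ≤ t q) (ht1 : ∀ q, t q ≤ 1)
    (hsum : (D : ℝ) - m ≤ ∑ q, t q) :
    ∑ q ∈ Finset.univ.filter (fun q : Fin D => m ≤ (q : ℕ)), lam q ≤ ∑ q, lam q * t q := by
  classical
  set μ := lam ⟨m, hm⟩ with hμ
  set P := Finset.univ.filter (fun q : Fin D => m ≤ (q : ℕ)) with hP
  set N := Finset.univ.filter (fun q : Fin D => ¬ m ≤ (q : ℕ)) with hN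
  have hPN : ∑ q ∈ P, (lam q * t q) + ∑ q ∈ N, (lam q * t q) = ∑ q, lam q * t q :=
    Finset.sum_filter_add_sum_filter_not _ _ _
  have hPt : ∑ q ∈ P, t q + ∑ q ∈ N, t q = ∑ q, t q :=
    Finset.sum_filter_add_sum_filter_not _ _ _
  have hcard : (P.card : ℝ) = (D : ℝ) - m := by
    have hPI : P = Finset.Ici (⟨m, hm⟩ : Fin D) := by
      ext q; simp [hP, Finset.mem_Ici, Fin.le_def]
    rw [hPI, Fin.card_Ici, Nat.cast_sub hm.le]
  have h1 : ∀ q ∈ P, lam q ≤ lam q * t q + μ * (1 - t q) := by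
    intro q hq
    rw [hP, Finset.mem_filter] at hq
    have hle : (⟨m, hm⟩ : Fin D) ≤ q := by
      rw [Fin.le_def]; exact hq.2
    have := mul_le_mul_of_nonneg_right (hord _ q hle) (sub_nonneg.2 (ht1 q))
    nlinarith [this]
  have h2 : ∀ q ∈ N, μ * t q ≤ lam q * t q := by
    intro q hq
    rw [hN, Finset.mem_filter] at hq
    have hle : q ≤ (⟨m, hm⟩ : Fin D) := by
      rw [Fin.le_def]; exact le_of_lt (lt_of_not_ge hq.2)
    exact mul_le_mul_of_nonneg_right (hord q _ hle) (ht0 q)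
  have s1 : ∑ q ∈ P, lam q ≤ ∑ q ∈ P, (lam q * t q + μ * (1 - t q)) := Finset.sum_le_sum h1
  have e1 : ∑ q ∈ P, (lam q * t q + μ * (1 - t q))
      = ∑ q ∈ P, lam q * t q + μ * ((P.card : ℝ) - ∑ q ∈ P, t q) := by
    rw [Finset.sum_add_distrib, ← Finset.mul_sum, Finset.sum_sub_distrib, Finset.sum_const,
      nsmul_eq_mul, mul_one]
  have s2 : ∑ q ∈ N, μ * t q ≤ ∑ q ∈ N, lam q * t q := Finset.sum_le_sum h2
  have e2 : ∑ q ∈ N, μ * t q = μ * ∑ q ∈ N, t q := by rw [Finset.mul_sum]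
  have h3 : (P.card : ℝ) - ∑ q ∈ P, t q ≤ ∑ q ∈ N, t q := by
    rw [hcard]; linarith
  have h4 : μ * ((P.card : ℝ) - ∑ q ∈ P, t q) ≤ μ * ∑ q ∈ N, t q :=
    mul_le_mul_of_nonneg_left h3 hpos.le
  linarith

private lemma trace_proj_step (M Q : Matrix (Fin D) (Fin D) ℝ) (hQt : Qᵀ = Q)
    (hQQ : Q * Q = Q) : (Mᵀ * M * Q).trace = ((M * Q)ᵀ * (M * Q)).trace := by
  have e : (M * Q)ᵀ * (M * Q) = Q * (Mᵀ * M * Q) := by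
    rw [Matrix.transpose_mul, hQt]; noncomm_ring
  rw [e]
  conv_rhs => rw [Matrix.trace_mul_comm Q (Mᵀ * M * Q), Matrix.mul_assoc (Mᵀ * M) Q Q, hQQ]

end AuxLemmas

/-- If `S = ∑ i λ i γ i γ iᵀ` is symmetric PSD with ordered eigenvalues and `λ m > 0`,
then `Λ* = ∑_{i<m} (1/λ i) γ i γ iᵀ` achieves `tr((I - SΛ*)² S) = ∑_{q ≥ m} λ q`, and
hence minimizes the objective over all matrices of rank at most `m`. -/
theorem optimal_lambda_achieves_min (D : ℕ) (m : ℕ) (hm : m < D)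
    (lam : Fin D → ℝ) (γ : Fin D → (Fin D → ℝ))
    (horth : ∀ i j, (γ i) ⬝ᵥ (γ j) = if i = j then 1 else 0)
    (hord : ∀ i j : Fin D, i ≤ j → lam j ≤ lam i)
    (hpos : 0 < lam ⟨m, hm⟩)
    (S : Matrix (Fin D) (Fin D) ℝ)
    (hS : S = ∑ i, lam i • Matrix.vecMulVec (γ i) (γ i))
    (hPSD : S.PosSemidef)
    (Λstar : Matrix (Fin D) (Fin D) ℝ)
    (hΛstar : Λstar = ∑ i ∈ Finset.univ.filter (fun i : Fin D => (i : ℕ) < m),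
        (1 / lam i) • Matrix.vecMulVec (γ i) (γ i)) :
    ((1 - S * Λstar) ^ 2 * S).trace =
        ∑ q ∈ Finset.univ.filter (fun q : Fin D => m ≤ (q : ℕ)), lam q ∧
      ∀ Λ : Matrix (Fin D) (Fin D) ℝ, Λ.rank ≤ m →
        ((1 - S * Λstar) ^ 2 * S).trace ≤ ((1 - S * Λ)ᵀ * S * (1 - S * Λ)).trace := by
  classical
  set F := Finset.univ.filter (fun i : Fin D => (i : ℕ) < m) with hF
  set P := ∑ j ∈ F, vecMulVec (γ j) (γ j) with hPdef
  -- generic product computation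
  have hterm : ∀ (i j : Fin D) (a c : ℝ),
      (a • vecMulVec (γ i) (γ i)) * (c • vecMulVec (γ j) (γ j))
        = if i = j then (a * c) • vecMulVec (γ j) (γ j) else 0 := by
    intro i j a c
    rw [smul_mul_assoc, mul_smul_comm, vmv_mul_vmv, horth]
    by_cases h : i = j
    · subst h; simp [smul_smul]
    · simp [h]
  have key : ∀ (c : Fin D → ℝ) (F' : Finset (Fin D)),
      (∑ i, lam i • vecMulVec (γ i) (γ i)) * (∑ j ∈ F', c j • vecMulVec (γ j) (γ j))
        = ∑ j ∈ F', (lam j * c j) • vecMulVec (γ j) (γ j) := by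
    intro c F'
    calc (∑ i, lam i • vecMulVec (γ i) (γ i)) * (∑ j ∈ F', c j • vecMulVec (γ j) (γ j))
        = ∑ i, ∑ j ∈ F', ((lam i • vecMulVec (γ i) (γ i)) * (c j • vecMulVec (γ j) (γ j))) := by
          rw [Finset.sum_mul]
          exact Finset.sum_congr rfl fun i _ => Finset.mul_sum _ _ _
      _ = ∑ j ∈ F', ∑ i, ((lam i • vecMulVec (γ i) (γ i)) * (c j • vecMulVec (γ j) (γ j))) :=
          Finset.sum_comm
      _ = ∑ j ∈ F', (lam j * c j) • vecMulVec (γ j) (γ j) := by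
          refine Finset.sum_congr rfl fun j _ => ?_
          rw [Finset.sum_congr rfl fun i _ => hterm i j (lam i) (c j)]
          simp [Finset.sum_ite_eq']
  have hlam_ne : ∀ j ∈ F, lam j ≠ 0 := by
    intro j hj
    rw [hF, Finset.mem_filter] at hj
    have hle : j ≤ (⟨m, hm⟩ : Fin D) := by rw [Fin.le_def]; exact le_of_lt hj.2
    exact ne_of_gt (lt_of_lt_of_le hpos (hord j _ hle))
  have hSΛ : S * Λstar = P := by
    rw [hS, hΛstar, key, hPdef]
    refine Finset.sum_congr rfl fun j hj => ?_
    rw [mul_one_div, div_self (hlam_ne j hj), one_smul]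
  have hPS : P * S = ∑ j ∈ F, lam j • vecMulVec (γ j) (γ j) := by
    rw [hPdef, hS, Finset.sum_mul]
    refine Finset.sum_congr rfl fun i hi => ?_
    rw [Finset.mul_sum]
    have h2 : ∀ j : Fin D, vecMulVec (γ i) (γ i) * (lam j • vecMulVec (γ j) (γ j))
        = if i = j then lam j • vecMulVec (γ i) (γ j) else 0 := by
      intro j
      rw [mul_smul_comm, vmv_mul_vmv, horth]
      by_cases h : i = j
      · subst h; simp
      · simp [h]
    rw [Finset.sum_congr rfl fun j _ => h2 j]
    simp [Finset.sum_ite_eq']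
  have hPP : P * P = P := by
    rw [hPdef, Finset.sum_mul]
    refine Finset.sum_congr rfl fun i hi => ?_
    rw [Finset.mul_sum]
    have h2 : ∀ j : Fin D, vecMulVec (γ i) (γ i) * vecMulVec (γ j) (γ j)
        = if i = j then vecMulVec (γ i) (γ j) else 0 := by
      intro j
      rw [vmv_mul_vmv, horth]
      by_cases h : i = j
      · subst h; simp
      · simp [h]
    rw [Finset.sum_congr rfl fun j _ => h2 j]
    simp [Finset.sum_ite_eq, hi]
  have h1P : (1 - S * Λstar) ^ 2 = 1 - P := by
    rw [hSΛ]
    have e : (1 - P) ^ 2 = 1 - P - P + P * P := by noncomm_ring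
    rw [e, hPP]; abel
  -- equality part
  have heq : ((1 - S * Λstar) ^ 2 * S).trace
      = ∑ q ∈ Finset.univ.filter (fun q : Fin D => m ≤ (q : ℕ)), lam q := by
    rw [h1P, Matrix.sub_mul, one_mul, hPS]
    have hsplit : ∑ j ∈ F, lam j • vecMulVec (γ j) (γ j)
        + ∑ j ∈ Finset.univ.filter (fun j : Fin D => ¬ (j : ℕ) < m),
            lam j • vecMulVec (γ j) (γ j)
        = ∑ j, lam j • vecMulVec (γ j) (γ j) :=
      Finset.sum_filter_add_sum_filter_not _ _ _
    have hflip : Finset.univ.filter (fun j : Fin D => ¬ (j : ℕ) < m)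
        = Finset.univ.filter (fun q : Fin D => m ≤ (q : ℕ)) := by
      ext q; simp [not_lt]
    rw [hS, ← hsplit, hflip]
    rw [add_sub_cancel_left]
    rw [Matrix.trace_sum]
    refine Finset.sum_congr rfl fun q _ => ?_
    rw [Matrix.trace_smul, trace_vmv]
    have := horth q q
    simp at this
    rw [this]
    simp
  refine ⟨heq, ?_⟩
  -- minimality part
  intro Λ hΛrank
  rw [heq]
  open scoped MatrixOrder in set R := CFC.sqrt S with hRdef
  open scoped MatrixOrder in have hR2 : R * R = S := CFC.sqrt_mul_sqrt_self S hPSD.nonneg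
  have hRt : Rᵀ = R := by
    open scoped MatrixOrder in have h := (CFC.sqrt_nonneg S).posSemidef.isHermitian
    rwa [Matrix.IsHermitian, Matrix.conjTranspose_eq_transpose_of_trivial] at h
  set B := R * S * Λ with hBdef
  have hBrank : B.rank ≤ m := le_trans (Matrix.rank_mul_le_right _ _) hΛrank
  obtain ⟨Q, hQt, hQQ, hBQ, hQtr⟩ := exists_proj m B hBrank
  set M := R - B with hMdef
  have hM : R * (1 - S * Λ) = M := by
    rw [Matrix.mul_sub, mul_one, hMdef, hBdef, Matrix.mul_assoc]
  have hobj : ((1 - S * Λ)ᵀ * S * (1 - S * Λ)).trace = (Mᵀ * M).trace := by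
    have e : Mᵀ * M = (1 - S * Λ)ᵀ * S * (1 - S * Λ) := by
      rw [← hM, Matrix.transpose_mul, hRt]
      calc (1 - S * Λ)ᵀ * R * (R * (1 - S * Λ))
          = (1 - S * Λ)ᵀ * (R * R) * (1 - S * Λ) := by noncomm_ring
        _ = (1 - S * Λ)ᵀ * S * (1 - S * Λ) := by rw [hR2]
    rw [e]
  rw [hobj]
  -- split the trace
  have hsplit : (Mᵀ * M).trace = (Mᵀ * M * (1 - Q)).trace + (Mᵀ * M * Q).trace := by
    rw [← Matrix.trace_add, ← Matrix.mul_add]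
    simp
  have h1Qt : (1 - Q)ᵀ = 1 - Q := by rw [Matrix.transpose_sub, Matrix.transpose_one, hQt]
  have h1QQ : (1 - Q) * (1 - Q) = 1 - Q := by
    have e : (1 - Q) * (1 - Q) = 1 - Q - Q + Q * Q := by noncomm_ring
    rw [e, hQQ]; abel
  have hpos1 : 0 ≤ (Mᵀ * M * (1 - Q)).trace := by
    rw [trace_proj_step M (1 - Q) h1Qt h1QQ]
    exact trace_transpose_mul_self_nonneg _
  have hMQ : M * Q = R * Q := by rw [hMdef, Matrix.sub_mul, hBQ, sub_zero]
  have htr2 : (Mᵀ * M * Q).trace = (S * Q).trace := by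
    rw [trace_proj_step M Q hQt hQQ, hMQ]
    have e : (R * Q)ᵀ * (R * Q) = Q * (S * Q) := by
      rw [Matrix.transpose_mul, hRt, hQt]
      calc Q * R * (R * Q) = Q * ((R * R) * Q) := by noncomm_ring
        _ = Q * (S * Q) := by rw [hR2]
    rw [e, Matrix.trace_mul_comm]
    rw [Matrix.mul_assoc S Q Q, hQQ]
  -- evaluate tr(SQ)
  set t : Fin D → ℝ := fun q => (γ q) ⬝ᵥ (Q.mulVec (γ q)) with htdef
  have htrSQ : (S * Q).trace = ∑ q, lam q * t q := by
    rw [hS, Finset.sum_mul, Matrix.trace_sum]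
    refine Finset.sum_congr rfl fun q _ => ?_
    rw [smul_mul_assoc, Matrix.trace_smul, trace_vmv_mul]
    simp [htdef]
  have ht0 : ∀ q, 0 ≤ t q := fun q => proj_dot_nonneg Q hQt hQQ (γ q)
  have ht1 : ∀ q, t q ≤ 1 := by
    intro q
    have h := proj_dot_nonneg (1 - Q) h1Qt h1QQ (γ q)
    have hγq : (γ q) ⬝ᵥ (γ q) = 1 := by simpa using horth q q
    rw [Matrix.sub_mulVec, Matrix.one_mulVec, dotProduct_sub, hγq] at h
    have : t q = (γ q) ⬝ᵥ (Q.mulVec (γ q)) := rfl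
    linarith
  have hsum : (D : ℝ) - m ≤ ∑ q, t q := by
    have := trace_eq_sum γ horth Q
    rw [← this]
    exact hQtr
  have hbound := sum_lam_bound D m hm lam hord hpos t ht0 ht1 hsum
  rw [← htrSQ] at hbound
  linarith
end

section
/- For a symmetric PSD matrix S = ΨᵀΨ with eigenvalues λ_1 ≥ ⋯ ≥ λ_D, the minimum of Σ_{i=1}^N ‖ψ_i − S Λ ψ_i‖² over all Λ ∈ ℝ^{D×D} of rank at most m equals Σ_{q=m+1}^D λ_q, where ψ_i are the rows of Ψ. -/
open Matrix

open scoped RealInnerProductSpace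

lemma filter_lt_card (m D : ℕ) (hm : m < D) :
    (Finset.univ.filter fun q : Fin D => (q:ℕ) < m).card = m := by
  rw [show (Finset.univ.filter fun q : Fin D => (q:ℕ) < m) = Finset.image (Fin.castLE hm.le) Finset.univ by
    ext q
    simp only [Finset.mem_filter, Finset.mem_univ, true_and, Finset.mem_image]
    constructor
    · intro h; exact ⟨⟨q, h⟩, Fin.ext rfl⟩
    · rintro ⟨p, rfl⟩; exact p.2]
  rw [Finset.card_image_of_injective _ (Fin.castLE_injective _), Finset.card_univ, Fintype.card_fin]

lemma arith_lb (D m : ℕ) (hm : m < D) (lam t : Fin D → ℝ)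
    (hnn : ∀ q, 0 ≤ lam q) (hord : ∀ i j : Fin D, i ≤ j → lam j ≤ lam i)
    (ht0 : ∀ q, 0 ≤ t q) (ht1 : ∀ q, t q ≤ 1) (hts : ∑ q, t q ≤ (m : ℝ)) :
    ∑ q ∈ Finset.univ.filter (fun q : Fin D => m ≤ (q : ℕ)), lam q
      ≤ ∑ q : Fin D, lam q * (1 - t q) := by
  classical
  set A := Finset.univ.filter (fun q : Fin D => (q:ℕ) < m) with hA
  set B := Finset.univ.filter (fun q : Fin D => m ≤ (q : ℕ)) with hB
  have hsplit : ∀ f : Fin D → ℝ, ∑ q, f q = ∑ q ∈ A, f q + ∑ q ∈ B, f q := by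
    intro f
    rw [hA, hB, ← Finset.sum_filter_add_sum_filter_not Finset.univ (fun q : Fin D => (q:ℕ) < m)]
    congr 1
    apply Finset.sum_congr _ (fun _ _ => rfl)
    ext q; simp [not_lt]
  set L := lam ⟨m, hm⟩ with hL
  have hLpos : 0 ≤ L := hnn _
  -- ∑_B lam * t ≤ L * ∑_B t
  have h1 : ∑ q ∈ B, lam q * t q ≤ L * ∑ q ∈ B, t q := by
    rw [Finset.mul_sum]
    apply Finset.sum_le_sum
    intro q hq
    simp only [hB, Finset.mem_filter] at hq
    exact mul_le_mul_of_nonneg_right (hord ⟨m, hm⟩ q hq.2) (ht0 q)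
  -- ∑_B t ≤ m - ∑_A t
  have h2 : ∑ q ∈ B, t q ≤ (m : ℝ) - ∑ q ∈ A, t q := by
    have := hsplit t
    linarith
  -- L * (m - ∑_A t) = ∑_A L*(1 - t q) ≤ ∑_A lam q * (1 - t q)
  have hcard : (A.card : ℝ) = m := by rw [hA, filter_lt_card m D hm]
  have h3 : L * ((m:ℝ) - ∑ q ∈ A, t q) ≤ ∑ q ∈ A, lam q * (1 - t q) := by
    have : ∑ q ∈ A, L * (1 - t q) = L * ((m:ℝ) - ∑ q ∈ A, t q) := by
      simp only [mul_sub, mul_one]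
      rw [Finset.sum_sub_distrib, Finset.sum_const, nsmul_eq_mul, ← Finset.mul_sum, hcard]
      ring
    rw [← this]
    apply Finset.sum_le_sum
    intro q hq
    simp only [hA, Finset.mem_filter] at hq
    have hq' : q ≤ (⟨m, hm⟩ : Fin D) := by
      simp only [Fin.le_def]; exact le_of_lt hq.2
    exact mul_le_mul_of_nonneg_right (hord q ⟨m, hm⟩ hq') (by linarith [ht1 q])
  have key : ∑ q ∈ B, lam q ≤ ∑ q ∈ A, lam q * (1 - t q) + ∑ q ∈ B, lam q * (1 - t q) := by
    have e : ∀ q, lam q = lam q * t q + lam q * (1 - t q) := by intro q; ring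
    calc ∑ q ∈ B, lam q = ∑ q ∈ B, lam q * t q + ∑ q ∈ B, lam q * (1 - t q) := by
          rw [← Finset.sum_add_distrib]; exact Finset.sum_congr rfl (fun q _ => e q)
      _ ≤ L * ∑ q ∈ B, t q + ∑ q ∈ B, lam q * (1 - t q) := by linarith
      _ ≤ L * ((m:ℝ) - ∑ q ∈ A, t q) + ∑ q ∈ B, lam q * (1 - t q) := by
          have := mul_le_mul_of_nonneg_left h2 hLpos; linarith
      _ ≤ _ := by linarith
  rw [hsplit (fun q => lam q * (1 - t q))]
  exact key

open scoped RealInnerProductSpace in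
lemma geom_lb (D m : ℕ) (hm : m < D) (lam : Fin D → ℝ)
    (b : Fin D → EuclideanSpace ℝ (Fin D)) (hb : Orthonormal ℝ b)
    (hnn : ∀ q, 0 ≤ lam q) (hord : ∀ i j : Fin D, i ≤ j → lam j ≤ lam i)
    (V : Submodule ℝ (EuclideanSpace ℝ (Fin D))) (hV : Module.finrank ℝ V ≤ m)
    (v : Fin D → EuclideanSpace ℝ (Fin D)) (hv : ∀ q, v q ∈ V) :
    ∑ q ∈ Finset.univ.filter (fun q : Fin D => m ≤ (q : ℕ)), lam q
      ≤ ∑ q : Fin D, lam q * ‖b q - v q‖ ^ 2 := by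
  classical
  have hne : Nonempty (Fin D) := ⟨⟨m, hm⟩⟩
  have hcard : Fintype.card (Fin D) = Module.finrank ℝ (EuclideanSpace ℝ (Fin D)) := by
    simp [finrank_euclideanSpace_fin]
  have hspan : ⊤ ≤ Submodule.span ℝ (Set.range b) :=
    (hb.linearIndependent.span_eq_top_of_card_eq_finrank hcard).ge
  let B : OrthonormalBasis (Fin D) ℝ (EuclideanSpace ℝ (Fin D)) := OrthonormalBasis.mk hb hspan
  have hBc : ∀ q, B q = b q := fun q => by simp [B]
  set P := V.orthogonalProjectionOnto
  set t : Fin D → ℝ := fun q => ‖(P (b q) : EuclideanSpace ℝ (Fin D))‖ ^ 2 with ht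
  have hbq : ∀ q, ‖b q‖ = 1 := fun q => hb.1 q
  -- t q ≤ 1 and 0 ≤ t q
  have hNorm : ∀ q, ‖b q - (P (b q) : EuclideanSpace ℝ (Fin D))‖ ^ 2 = 1 - t q := by
    intro q
    have h := Submodule.norm_sq_eq_add_norm_sq_projection (b q) V
    have h2 : ((Vᗮ.orthogonalProjectionOnto (b q)) : EuclideanSpace ℝ (Fin D))
        = b q - (P (b q) : EuclideanSpace ℝ (Fin D)) := by
      exact Submodule.starProjection_orthogonal_val (K := V) (b q)
    rw [hbq q, one_pow, ← Submodule.norm_coe, ← Submodule.norm_coe, h2] at h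
    have h' : (1:ℝ) = t q + ‖b q - (P (b q) : EuclideanSpace ℝ (Fin D))‖ ^ 2 := h
    linarith
  have ht0 : ∀ q, 0 ≤ t q := fun q => sq_nonneg _
  have ht1 : ∀ q, t q ≤ 1 := by
    intro q
    have := hNorm q
    nlinarith [sq_nonneg ‖b q - (P (b q) : EuclideanSpace ℝ (Fin D))‖]
  -- sum of t ≤ m via Parseval
  have hts : ∑ q, t q ≤ (m : ℝ) := by
    set e := stdOrthonormalBasis ℝ V with he
    set u : Fin (Module.finrank ℝ ↥V) → EuclideanSpace ℝ (Fin D) := fun j => (e j : EuclideanSpace ℝ (Fin D)) with hu'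
    have hu : Orthonormal ℝ u := e.orthonormal.comp_linearIsometry V.subtypeₗᵢ
    have hPt : ∀ q, t q = ∑ j, ⟪u j, b q⟫ ^ 2 := by
      intro q
      have expand : (P (b q) : EuclideanSpace ℝ (Fin D)) = ∑ j, ⟪u j, b q⟫ • u j := by
        rw [show P (b q) = ∑ j, ⟪u j, b q⟫ • e j from e.orthogonalProjectionOnto_apply_eq_sum (b q)]
        simp [hu']
      have h0 : t q = ⟪(P (b q) : EuclideanSpace ℝ (Fin D)), (P (b q) : EuclideanSpace ℝ (Fin D))⟫ :=
        (real_inner_self_eq_norm_sq _).symm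
      rw [h0, expand, hu.inner_sum]
      simp [sq]
    calc ∑ q, t q = ∑ j, ∑ q, ⟪u j, b q⟫ ^ 2 := by
          rw [Finset.sum_congr rfl fun q _ => hPt q, Finset.sum_comm]
      _ = ∑ _j : Fin (Module.finrank ℝ ↥V), (1:ℝ) := by
          refine Finset.sum_congr rfl fun j _ => ?_
          have h1 : ∀ q : Fin D, ⟪u j, b q⟫ ^ 2 = ⟪u j, B q⟫ * ⟪B q, u j⟫ := fun q => by
            rw [hBc, sq, real_inner_comm (b q) (u j)]
          rw [Finset.sum_congr rfl fun q _ => h1 q, B.sum_inner_mul_inner,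
            real_inner_self_eq_norm_sq, hu.1 j, one_pow]
      _ = (Module.finrank ℝ ↥V : ℝ) := by simp
      _ ≤ (m:ℝ) := by exact_mod_cast hV
  -- pointwise bound
  have hpw : ∀ q, lam q * (1 - t q) ≤ lam q * ‖b q - v q‖ ^ 2 := by
    intro q
    apply mul_le_mul_of_nonneg_left _ (hnn q)
    rw [← hNorm q]
    have hmin : ‖b q - (P (b q) : EuclideanSpace ℝ (Fin D))‖ ≤ ‖b q - v q‖ := by
      have h1 : b q - v q = (b q - (P (b q) : EuclideanSpace ℝ (Fin D))) + ((P (b q) : EuclideanSpace ℝ (Fin D)) - v q) := by abel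
      have h2 : ⟪b q - (P (b q) : EuclideanSpace ℝ (Fin D)), (P (b q) : EuclideanSpace ℝ (Fin D)) - v q⟫ = 0 := by
        apply Submodule.starProjection_inner_eq_zero
        exact Submodule.sub_mem V (P (b q)).2 (hv q)
      have h3 : ‖b q - v q‖ ^ 2 = ‖b q - (P (b q) : EuclideanSpace ℝ (Fin D))‖ ^ 2 + ‖(P (b q) : EuclideanSpace ℝ (Fin D)) - v q‖ ^ 2 := by
        rw [h1]
        simpa [sq] using norm_add_sq_eq_norm_sq_add_norm_sq_of_inner_eq_zero _ _ h2
      nlinarith [norm_nonneg (b q - v q), norm_nonneg (b q - (P (b q) : EuclideanSpace ℝ (Fin D))),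
        sq_nonneg ‖(P (b q) : EuclideanSpace ℝ (Fin D)) - v q‖]
    nlinarith [norm_nonneg (b q - (P (b q) : EuclideanSpace ℝ (Fin D))), norm_nonneg (b q - v q)]
  calc ∑ q ∈ Finset.univ.filter (fun q : Fin D => m ≤ (q : ℕ)), lam q
      ≤ ∑ q : Fin D, lam q * (1 - t q) := arith_lb D m hm lam t hnn hord ht0 ht1 hts
    _ ≤ ∑ q : Fin D, lam q * ‖b q - v q‖ ^ 2 := Finset.sum_le_sum fun q _ => hpw q


/-- For `S = ΨᵀΨ` with ordered eigenvalues `λ 0 ≥ ⋯ ≥ λ (D-1)` (orthonormal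
eigenvectors `γ`) and `λ m > 0`, the minimum of `∑ i ‖ψ i - S Λ ψ i‖²` over all
`Λ` of rank at most `m` equals `∑_{q ≥ m} λ q`. -/
theorem min_residual_equals_tail_eigenvalues (N D : ℕ) (m : ℕ) (hm : m < D)
    (Ψ : Matrix (Fin N) (Fin D) ℝ)
    (lam : Fin D → ℝ) (γ : Fin D → (Fin D → ℝ))
    (horth : ∀ i j, (γ i) ⬝ᵥ (γ j) = if i = j then 1 else 0)
    (heig : ∀ i, (Ψᵀ * Ψ).mulVec (γ i) = lam i • γ i)
    (hord : ∀ i j : Fin D, i ≤ j → lam j ≤ lam i)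
    (hpos : 0 < lam ⟨m, hm⟩) :
    IsLeast
      {t : ℝ | ∃ Λ : Matrix (Fin D) (Fin D) ℝ, Λ.rank ≤ m ∧
        t = ∑ i, ∑ d, (Ψ i d - Matrix.vecMul (Ψ i) (Ψᵀ * Ψ * Λ) d) ^ 2}
      (∑ q ∈ Finset.univ.filter (fun q : Fin D => m ≤ (q : ℕ)), lam q) := by
  classical
  set S := Ψᵀ * Ψ with hSdef
  have hSsymm : Sᵀ = S := by rw [hSdef, transpose_mul, transpose_transpose]
  set G : Matrix (Fin D) (Fin D) ℝ := Matrix.of γ with hG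
  have hGG : G * Gᵀ = 1 := by
    ext i j
    simpa [Matrix.mul_apply, Matrix.one_apply, dotProduct, hG] using horth i j
  have hGG' : Gᵀ * G = 1 := mul_eq_one_comm.mp hGG
  have hvec : ∀ q, Matrix.vecMul (γ q) S = lam q • γ q := by
    intro q
    rw [← hSsymm, Matrix.vecMul_transpose]
    exact heig q
  set Dg : Matrix (Fin D) (Fin D) ℝ := Matrix.diagonal lam with hDg
  have hGS : G * S = Dg * G := by
    ext q d
    rw [hDg, Matrix.diagonal_mul]
    have := congrFun (hvec q) d
    simp only [Matrix.vecMul, dotProduct, Pi.smul_apply, smul_eq_mul] at this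
    simp only [Matrix.mul_apply, hG, Matrix.of_apply]
    simpa using this
  have hSpec : S = Gᵀ * (Dg * G) := by
    calc S = 1 * S := (one_mul S).symm
      _ = Gᵀ * G * S := by rw [hGG']
      _ = Gᵀ * (G * S) := by rw [Matrix.mul_assoc]
      _ = Gᵀ * (Dg * G) := by rw [hGS]
  -- nonnegativity of eigenvalues
  have hnn : ∀ q, 0 ≤ lam q := by
    intro q
    have h1 : γ q ⬝ᵥ (S.mulVec (γ q)) = lam q := by
      rw [heig q, dotProduct_smul, horth q q]
      simp
    rw [hSdef, ← Matrix.mulVec_mulVec, Matrix.dotProduct_mulVec, Matrix.vecMul_transpose] at h1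
    rw [← h1]
    exact Finset.sum_nonneg fun d _ => mul_self_nonneg _
  -- the key objective identity
  have hf : ∀ Λ : Matrix (Fin D) (Fin D) ℝ,
      ∑ i, ∑ d, (Ψ i d - Matrix.vecMul (Ψ i) (S * Λ) d) ^ 2
        = ∑ q, lam q * ∑ d, (γ q d - lam q * Matrix.vecMul (γ q) Λ d) ^ 2 := by
    intro Λ
    set A : Matrix (Fin D) (Fin D) ℝ := 1 - S * Λ with hA
    have h1 : ∀ i d, Ψ i d - Matrix.vecMul (Ψ i) (S * Λ) d = (Ψ * A) i d := by
      intro i d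
      rw [hA, Matrix.mul_sub, Matrix.mul_one, Matrix.sub_apply]
      simp [Matrix.mul_apply, Matrix.vecMul, dotProduct]
    have hmat : (Ψ * A)ᵀ * (Ψ * A) = (G * A)ᵀ * (Dg * (G * A)) := by
      rw [Matrix.transpose_mul, Matrix.transpose_mul]
      calc Aᵀ * Ψᵀ * (Ψ * A) = Aᵀ * (Ψᵀ * (Ψ * A)) := by rw [Matrix.mul_assoc]
        _ = Aᵀ * (S * A) := by rw [← Matrix.mul_assoc Ψᵀ Ψ A, ← hSdef]
        _ = Aᵀ * (Gᵀ * (Dg * (G * A))) := by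
            rw [hSpec, Matrix.mul_assoc (Gᵀ) (Dg * G) A, Matrix.mul_assoc Dg G A]
        _ = Aᵀ * Gᵀ * (Dg * (G * A)) := by rw [Matrix.mul_assoc]
    have h2 : ∑ i, ∑ d, ((Ψ * A) i d) ^ 2 = ∑ d, ((Ψ * A)ᵀ * (Ψ * A)) d d := by
      rw [Finset.sum_comm]
      refine Finset.sum_congr rfl fun d _ => ?_
      simp [Matrix.mul_apply, Matrix.transpose_apply, sq, mul_comm]
    have h3 : ∑ d, ((G * A)ᵀ * (Dg * (G * A))) d d
        = ∑ q, lam q * ∑ d, ((G * A) q d) ^ 2 := by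
      have hent : ∀ d q, ((G * A)ᵀ) d q * ((Dg * (G * A))) q d
          = lam q * ((G * A) q d) ^ 2 := by
        intro d q
        rw [Matrix.transpose_apply, hDg, Matrix.diagonal_mul]
        ring
      calc ∑ d, ((G * A)ᵀ * (Dg * (G * A))) d d
          = ∑ d, ∑ q, lam q * ((G * A) q d) ^ 2 := by
            refine Finset.sum_congr rfl fun d _ => ?_
            rw [Matrix.mul_apply]
            exact Finset.sum_congr rfl fun q _ => hent d q
        _ = ∑ q, ∑ d, lam q * ((G * A) q d) ^ 2 := Finset.sum_comm
        _ = ∑ q, lam q * ∑ d, ((G * A) q d) ^ 2 := by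
            refine Finset.sum_congr rfl fun q _ => ?_
            rw [Finset.mul_sum]
    have h4 : ∀ q, Matrix.vecMul (γ q) (S * Λ) = fun d => lam q * Matrix.vecMul (γ q) Λ d := by
      intro q
      rw [← Matrix.vecMul_vecMul, hvec q, Matrix.smul_vecMul]
      rfl
    have h5 : ∀ q d, (G * A) q d = γ q d - lam q * Matrix.vecMul (γ q) Λ d := by
      intro q d
      have hrow : (G * A) q d = Matrix.vecMul (γ q) A d := by
        simp [Matrix.mul_apply, Matrix.vecMul, dotProduct, hG]
      rw [hrow, hA]
      have hsub : Matrix.vecMul (γ q) (1 - S * Λ) d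
          = Matrix.vecMul (γ q) (1 : Matrix (Fin D) (Fin D) ℝ) d
            - Matrix.vecMul (γ q) (S * Λ) d := by
        simp [Matrix.vecMul, dotProduct, Matrix.sub_apply, mul_sub, Finset.sum_sub_distrib]
      rw [hsub, Matrix.vecMul_one, h4 q]
    calc ∑ i, ∑ d, (Ψ i d - Matrix.vecMul (Ψ i) (S * Λ) d) ^ 2
        = ∑ i, ∑ d, ((Ψ * A) i d) ^ 2 :=
          Finset.sum_congr rfl fun i _ => Finset.sum_congr rfl fun d _ => by rw [h1]
      _ = ∑ d, ((Ψ * A)ᵀ * (Ψ * A)) d d := h2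
      _ = ∑ d, ((G * A)ᵀ * (Dg * (G * A))) d d := by rw [hmat]
      _ = ∑ q, lam q * ∑ d, ((G * A) q d) ^ 2 := h3
      _ = ∑ q, lam q * ∑ d, (γ q d - lam q * Matrix.vecMul (γ q) Λ d) ^ 2 :=
          Finset.sum_congr rfl fun q _ => by
            rw [Finset.sum_congr rfl fun d _ => by rw [h5 q d]]
  constructor
  · -- membership: the optimal Λ
    set Afil := Finset.univ.filter (fun q : Fin D => (q : ℕ) < m) with hAfil
    set Λ₀ : Matrix (Fin D) (Fin D) ℝ :=
      Matrix.of (fun a b => ∑ q ∈ Afil, (lam q)⁻¹ * (γ q a * γ q b)) with hΛ₀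
    refine ⟨Λ₀, ?_, ?_⟩
    · -- rank bound
      have hmv : ∀ x, Λ₀.mulVec x = ∑ q ∈ Afil, ((lam q)⁻¹ * (γ q ⬝ᵥ x)) • γ q := by
        intro x; funext a
        simp only [Matrix.mulVec, dotProduct, hΛ₀, Matrix.of_apply, Finset.sum_apply,
          Pi.smul_apply, smul_eq_mul]
        calc ∑ b, (∑ q ∈ Afil, (lam q)⁻¹ * (γ q a * γ q b)) * x b
            = ∑ b, ∑ q ∈ Afil, (lam q)⁻¹ * (γ q a * γ q b) * x b := by
              refine Finset.sum_congr rfl fun b _ => ?_; rw [Finset.sum_mul]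
          _ = ∑ q ∈ Afil, ∑ b, (lam q)⁻¹ * (γ q a * γ q b) * x b := Finset.sum_comm
          _ = ∑ q ∈ Afil, (lam q)⁻¹ * (∑ b, γ q b * x b) * γ q a := by
              refine Finset.sum_congr rfl fun q _ => ?_
              rw [Finset.mul_sum, Finset.sum_mul]
              refine Finset.sum_congr rfl fun b _ => ?_
              ring
      have hle : LinearMap.range Λ₀.mulVecLin
          ≤ Submodule.span ℝ ((Afil.image γ : Finset (Fin D → ℝ)) : Set (Fin D → ℝ)) := by
        rintro y ⟨x, rfl⟩
        rw [Matrix.mulVecLin_apply, hmv]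
        refine Submodule.sum_mem _ fun q hq => Submodule.smul_mem _ _ ?_
        refine Submodule.subset_span ?_
        simp only [Finset.coe_image, Set.mem_image, Finset.mem_coe]
        exact ⟨q, hq, rfl⟩
      have hrank : Λ₀.rank ≤ m := by
        have h1 : Λ₀.rank = Module.finrank ℝ (LinearMap.range Λ₀.mulVecLin) := rfl
        rw [h1]
        calc Module.finrank ℝ (LinearMap.range Λ₀.mulVecLin)
            ≤ Module.finrank ℝ (Submodule.span ℝ
                ((Afil.image γ : Finset (Fin D → ℝ)) : Set (Fin D → ℝ))) :=
              Submodule.finrank_mono hle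
          _ ≤ (Afil.image γ).card := finrank_span_finset_le_card _
          _ ≤ Afil.card := Finset.card_image_le
          _ = m := by rw [hAfil, filter_lt_card m D hm]
      exact hrank
    · -- value at Λ₀
      rw [hf Λ₀]
      have hval : ∀ q, Matrix.vecMul (γ q) Λ₀
          = fun d => if (q : ℕ) < m then (lam q)⁻¹ * γ q d else 0 := by
        intro q; funext d
        simp only [Matrix.vecMul, dotProduct, hΛ₀, Matrix.of_apply]
        calc ∑ a, γ q a * ∑ p ∈ Afil, (lam p)⁻¹ * (γ p a * γ p d)
            = ∑ a, ∑ p ∈ Afil, γ q a * ((lam p)⁻¹ * (γ p a * γ p d)) := by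
              refine Finset.sum_congr rfl fun a _ => ?_; rw [Finset.mul_sum]
          _ = ∑ p ∈ Afil, ∑ a, γ q a * ((lam p)⁻¹ * (γ p a * γ p d)) := Finset.sum_comm
          _ = ∑ p ∈ Afil, (lam p)⁻¹ * γ p d * (γ q ⬝ᵥ γ p) := by
              refine Finset.sum_congr rfl fun p _ => ?_
              simp only [dotProduct, Finset.mul_sum]
              refine Finset.sum_congr rfl fun a _ => ?_
              ring
          _ = ∑ p ∈ Afil, (lam p)⁻¹ * γ p d * (if q = p then 1 else 0) := by
              exact Finset.sum_congr rfl fun p _ => by rw [horth q p]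
          _ = if (q : ℕ) < m then (lam q)⁻¹ * γ q d else 0 := by
              by_cases hq : (q : ℕ) < m
              · rw [Finset.sum_eq_single q]
                · simp [hq]
                · intro p hp hpq
                  rw [if_neg (fun h => hpq h.symm), mul_zero]
                · intro hq'
                  exact absurd (by simp [hAfil, hq]) hq'
              · rw [if_neg hq]
                apply Finset.sum_eq_zero
                intro p hp
                have hne : q ≠ p := by
                  rintro rfl
                  rw [hAfil] at hp
                  simp only [Finset.mem_filter, Finset.mem_univ, true_and] at hp
                  exact hq hp
                rw [if_neg hne, mul_zero]
      have hterm : ∀ q : Fin D,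
          lam q * ∑ d, (γ q d - lam q * Matrix.vecMul (γ q) Λ₀ d) ^ 2
            = if m ≤ (q : ℕ) then lam q else 0 := by
        intro q
        rw [hval q]
        by_cases hq : (q : ℕ) < m
        · have hlamq : lam q ≠ 0 := by
            have hle : q ≤ (⟨m, hm⟩ : Fin D) := by
              simp only [Fin.le_def]; exact le_of_lt hq
            have := hord q ⟨m, hm⟩ hle
            linarith
          have hzero : ∀ d, γ q d - lam q * (if (q : ℕ) < m then (lam q)⁻¹ * γ q d else 0) = 0 := by
            intro d
            rw [if_pos hq, ← mul_assoc, mul_inv_cancel₀ hlamq, one_mul, sub_self]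
          have hsum0 : ∑ d, (γ q d - lam q * (if (q : ℕ) < m then (lam q)⁻¹ * γ q d else 0)) ^ 2
              = 0 := by
            apply Finset.sum_eq_zero
            intro d _
            rw [hzero d]
            norm_num
          rw [if_neg (not_le.mpr hq), hsum0, mul_zero]
        · have h1 : ∑ d, (γ q d - lam q * (if (q : ℕ) < m then (lam q)⁻¹ * γ q d else 0)) ^ 2
              = 1 := by
            have := (horth q q).trans (if_pos rfl)
            simp only [if_neg hq, mul_zero, sub_zero, sq]
            simpa [dotProduct] using this
          rw [h1, if_pos (not_lt.mp hq), mul_one]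
      rw [Finset.sum_filter]
      exact Finset.sum_congr rfl fun q _ => (hterm q).symm
  · -- lower bound
    rintro t ⟨Λ, hrk, rfl⟩
    rw [hf Λ]
    set toE := (WithLp.linearEquiv 2 ℝ (Fin D → ℝ)).symm with htoE
    set b : Fin D → EuclideanSpace ℝ (Fin D) := fun q => toE (γ q) with hb'
    have hbON : Orthonormal ℝ b := by
      rw [orthonormal_iff_ite]
      intro i j
      have hinner : ⟪b i, b j⟫ = (γ i) ⬝ᵥ (γ j) := by
        simp [PiLp.inner_apply, RCLike.inner_apply, hb', dotProduct, htoE, mul_comm]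
      rw [hinner, horth i j]
    set V : Submodule ℝ (EuclideanSpace ℝ (Fin D)) :=
      Submodule.map (toE : (Fin D → ℝ) →ₗ[ℝ] EuclideanSpace ℝ (Fin D))
        (LinearMap.range (Λᵀ).mulVecLin) with hV'
    have hVrank : Module.finrank ℝ V ≤ m := by
      rw [hV', LinearEquiv.finrank_map_eq]
      have h1 : Module.finrank ℝ (LinearMap.range (Λᵀ).mulVecLin) = (Λᵀ).rank := rfl
      rw [h1, Matrix.rank_transpose]
      exact hrk
    set v : Fin D → EuclideanSpace ℝ (Fin D) :=
      fun q => toE (lam q • Matrix.vecMul (γ q) Λ) with hv'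
    have hvV : ∀ q, v q ∈ V := by
      intro q
      refine Submodule.mem_map_of_mem ?_
      refine LinearMap.mem_range.mpr ⟨lam q • γ q, ?_⟩
      rw [Matrix.mulVecLin_apply, Matrix.mulVec_smul, Matrix.mulVec_transpose]
    have hnorm : ∀ q, ‖b q - v q‖ ^ 2
        = ∑ d, (γ q d - lam q * Matrix.vecMul (γ q) Λ d) ^ 2 := by
      intro q
      rw [← real_inner_self_eq_norm_sq, PiLp.inner_apply]
      refine Finset.sum_congr rfl fun d _ => ?_
      have hcomp : (b q - v q) d = γ q d - lam q * Matrix.vecMul (γ q) Λ d := rfl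
      simp [RCLike.inner_apply, hcomp, sq]
    calc ∑ q ∈ Finset.univ.filter (fun q : Fin D => m ≤ (q : ℕ)), lam q
        ≤ ∑ q, lam q * ‖b q - v q‖ ^ 2 := geom_lb D m hm lam b hbON hnn hord V hVrank v hvV
      _ = ∑ q, lam q * ∑ d, (γ q d - lam q * Matrix.vecMul (γ q) Λ d) ^ 2 :=
          Finset.sum_congr rfl fun q _ => by rw [hnorm q]
end
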